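/- Suppose 0 < ε < α ≤ 1, ε0, ε1 ∈ (0,1), and p* > 0 satisfies |p* − p_max| ≤ ε0·p_max. Let B_l = (g_1,…,g_l) be a sequence of l realizations such that |F(B_l,I)/l − f(I)| ≤ ε1·p* for every I ⊆ V. Let β = (α − ε1(1+ε0))/(1 + ε1(1+ε0)), and assume β > 0 and β·(1 − ε1(1+ε0)) − ε1(1+ε0) = α − ε. Then every invitation set I* ⊆ V with F(B_l,I*) ≥ β·F(B_l,V) satisfies f(I*) ≥ (α−ε)·p_max. -/

import Mathlib

open Finset MeasureTheory

/-- A social network with weights, an initiator `s`, and a target user `t ∉ N_s`. -/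
structure FriendNet (V : Type) [Fintype V] [DecidableEq V] where
  G : SimpleGraph V
  adjDec : DecidableRel G.Adj
  w : V → V → ℝ
  w_pos : ∀ u v : V, G.Adj u v → 0 < w u v
  w_le_one : ∀ u v : V, G.Adj u v → w u v ≤ 1
  w_eq_zero : ∀ u v : V, ¬ G.Adj u v → w u v = 0
  w_sum_le_one : ∀ v : V, ∑ u : V, w u v ≤ 1
  s : V
  t : V
  t_ne_s : t ≠ s
  t_not_friend : ¬ G.Adj s t

variable {V : Type} [Fintype V] [DecidableEq V]

namespace FriendNet

/-- The current friends (neighbors) `N_v` of a user `v`. -/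
def Nbr (net : FriendNet V) (v : V) : Finset V :=
  letI := net.adjDec
  Finset.univ.filter fun u => net.G.Adj u v

/-- `Φ(C)`: users not in `C` willing to accept an invitation, given thresholds `θ`. -/
noncomputable def Phi (net : FriendNet V) (θ : V → ℝ) (C : Finset V) : Finset V :=
  Finset.univ.filter fun u => u ∉ C ∧ θ u ≤ ∑ v ∈ C, net.w v u

/-- One round of the friending process: `C ∪ (Φ(C) ∩ I)`. -/
noncomputable def Cstep (net : FriendNet V) (θ : V → ℝ) (I : Finset V) (C : Finset V) : Finset V :=
  C ∪ (net.Phi θ C ∩ I)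

/-- `C_∞(I)`: the final set of the threshold friending process (it stabilizes after
`|V|` rounds). -/
noncomputable def Cinf (net : FriendNet V) (θ : V → ℝ) (I : Finset V) : Finset V :=
  (net.Cstep θ I)^[Fintype.card V] (net.Nbr net.s)

/-- The distribution of the thresholds: i.i.d. uniform on `[0,1]`. -/
noncomputable def thetaMeasure (V : Type) [Fintype V] : Measure (V → ℝ) :=
  Measure.pi fun _ => volume.restrict (Set.Icc (0 : ℝ) 1)

/-- The acceptance probability `f(I)`: probability over the thresholds that `t ∈ C_∞(I)`. -/
noncomputable def f (net : FriendNet V) (I : Finset V) : ℝ :=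
  (thetaMeasure V {θ : V → ℝ | net.t ∈ net.Cinf θ I}).toReal

/-- `p_max`: the maximum acceptance probability over all invitation sets. -/
noncomputable def pmax (net : FriendNet V) : ℝ := ⨆ I : Finset V, net.f I

/-- A realization: each user selects at most one current friend (`none` plays ℵ0). -/
def IsRealization (net : FriendNet V) (g : V → Option V) : Prop :=
  ∀ v u : V, g v = some u → net.G.Adj u v

/-- `Pr[g]`, the probability of generating the realization `g`. -/
noncomputable def realWeight (net : FriendNet V) (g : V → Option V) : ℝ :=
  ∏ v : V, (g v).elim (1 - ∑ u : V, net.w u v) (fun u => net.w u v)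

/-- `Ψ(H)` for a realization `g`. -/
def Psi (g : V → Option V) (H : Finset V) : Finset V :=
  Finset.univ.filter fun v => v ∉ H ∧ ∃ u ∈ H, g v = some u

/-- One round of Process 2: `H ∪ (Ψ(H) ∩ I)`. -/
def Hstep (g : V → Option V) (I : Finset V) (H : Finset V) : Finset V :=
  H ∪ (Psi g H ∩ I)

/-- `H_∞(g, I)`: the final set of Process 2 (it stabilizes after `|V|` rounds). -/
def Hinf (net : FriendNet V) (g : V → Option V) (I : Finset V) : Finset V :=
  (Hstep g I)^[Fintype.card V] (net.Nbr net.s)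

end FriendNet

/-- The loop of Algorithm 1 (backward trace), with fuel. `none` plays ℵ0. -/
def traceAux (g : V → Option V) (Ns : Finset V) : ℕ → V → Finset (Option V) → Finset (Option V)
  | 0, _, acc => acc
  | m + 1, u, acc =>
    match g u with
    | none => insert none acc
    | some v =>
      if some v ∈ acc then insert none acc
      else if v ∈ Ns then acc
      else traceAux g Ns m v (insert (some v) acc)

namespace FriendNet

/-- The backward trace `t(g)` computed by Algorithm 1. -/
def trace (net : FriendNet V) (g : V → Option V) : Finset (Option V) :=
  traceAux g (net.Nbr net.s) (Fintype.card V + 1) net.t {some net.t}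

/-- `f(g, I)`: the indicator that `I` covers `g`, i.e. `t(g) ⊆ I`. -/
noncomputable def fg (net : FriendNet V) (g : V → Option V) (I : Finset V) : ℝ :=
  if net.trace g ⊆ I.image some then 1 else 0

/-- `F(B_l, I) = Σ_{g ∈ B_l} f(g, I)`. -/
noncomputable def F (net : FriendNet V) {l : ℕ} (B : Fin l → V → Option V)
    (I : Finset V) : ℝ :=
  ∑ i : Fin l, net.fg (B i) I

end FriendNet

instance : MeasurableSpace (V → Option V) := ⊤

/-- The distribution of a random realization `ĝ`. -/
noncomputable def FriendNet.realMeasure (net : FriendNet V) : Measure (V → Option V) :=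
  ∑ g : V → Option V, ENNReal.ofReal (net.realWeight g) • Measure.dirac g

open Classical in
/-- `V_max`: users outside `{s} ∪ N_s` lying on some path from `{s} ∪ N_s` to `t`. -/
noncomputable def FriendNet.Vmax (net : FriendNet V) : Finset V :=
  Finset.univ.filter fun u =>
    u ∉ insert net.s (net.Nbr net.s) ∧
      ∃ v ∈ insert net.s (net.Nbr net.s),
        ∃ p : net.G.Walk v net.t, p.IsPath ∧ u ∈ p.support

/-! Enlarging the invitation set can only enlarge every round of the friending process, so
`f` is monotone and `p_max = f(V)`. Both `F(B_l, ·)/l` and `f` are then within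
`ε1 p* ≤ ε1 (1 + ε0) p_max` of each other at `V` and at `I*`, and chaining these estimates
through `F(B_l, I*) ≥ β F(B_l, V)` yields `f(I*) ≥ (β (1 - ε1 (1 + ε0)) - ε1 (1 + ε0)) p_max`. -/

namespace FriendNet

lemma w_nonneg (net : FriendNet V) (u v : V) : 0 ≤ net.w u v := by
  by_cases h : net.G.Adj u v
  · exact (net.w_pos u v h).le
  · exact (net.w_eq_zero u v h).ge

lemma Cstep_mono (net : FriendNet V) (θ : V → ℝ) {I J C C' : Finset V} (hIJ : I ⊆ J)
    (hC : C ⊆ C') : net.Cstep θ I C ⊆ net.Cstep θ J C' := by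
  intro u hu
  simp only [Cstep, Phi, Finset.mem_union, Finset.mem_inter, Finset.mem_filter] at hu ⊢
  rcases hu with hu | ⟨⟨_, _, hθ⟩, huI⟩
  · exact Or.inl (hC hu)
  · by_cases h : u ∈ C'
    · exact Or.inl h
    · refine Or.inr ⟨⟨Finset.mem_univ u, h, hθ.trans ?_⟩, hIJ huI⟩
      exact Finset.sum_le_sum_of_subset_of_nonneg hC fun v _ _ => net.w_nonneg v u

lemma Cinf_mono (net : FriendNet V) (θ : V → ℝ) {I J : Finset V} (hIJ : I ⊆ J) :
    net.Cinf θ I ⊆ net.Cinf θ J :=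
  Monotone.iterate_le_of_le (fun _ _ hC => net.Cstep_mono θ subset_rfl hC)
    (fun _ => net.Cstep_mono θ hIJ subset_rfl) _ _

instance : IsProbabilityMeasure (thetaMeasure V) := by
  have : IsProbabilityMeasure (volume.restrict (Set.Icc (0 : ℝ) 1)) :=
    ⟨by simp [Real.volume_Icc]⟩
  unfold thetaMeasure
  infer_instance

lemma f_mono (net : FriendNet V) {I J : Finset V} (hIJ : I ⊆ J) : net.f I ≤ net.f J :=
  ENNReal.toReal_mono (measure_ne_top _ _) (measure_mono fun θ hθ => net.Cinf_mono θ hIJ hθ)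

lemma pmax_eq_f_univ (net : FriendNet V) : net.pmax = net.f Finset.univ :=
  le_antisymm (ciSup_le fun I => net.f_mono (Finset.subset_univ I))
    (le_ciSup (Set.finite_range _).bddAbove Finset.univ)

end FriendNet

lemma mul_le_of_abs_sub_le_of_mul_le {a b p q β X δ : ℝ} (hβ : 0 ≤ β) (hδ : δ ≤ X * p)
    (ha : |a - p| ≤ δ) (hb : |b - q| ≤ δ) (hab : β * a ≤ b) :
    (β * (1 - X) - X) * p ≤ q := by
  have ha' : p - δ ≤ a := by linarith [(abs_le.mp ha).1]
  have hb' : b - δ ≤ q := by linarith [(abs_le.mp hb).2]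
  calc (β * (1 - X) - X) * p = β * (p - X * p) - X * p := by ring
    _ ≤ β * (p - δ) - δ := by gcongr
    _ ≤ β * a - δ := by gcongr
    _ ≤ q := by linarith

theorem objective_value_bounded_general (net : FriendNet V)
    (α ε ε0 ε1 pstar β : ℝ) {l : ℕ} (B : Fin l → V → Option V)
    (hε1 : ε1 ∈ Set.Ioo (0 : ℝ) 1)
    (hest : |pstar - net.pmax| ≤ ε0 * net.pmax)
    (hF : ∀ I : Finset V, |net.F B I / (l : ℝ) - net.f I| ≤ ε1 * pstar)
    (hβpos : 0 < β)
    (heq : β * (1 - ε1 * (1 + ε0)) - ε1 * (1 + ε0) = α - ε) :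
    ∀ Istar : Finset V, β * net.F B Finset.univ ≤ net.F B Istar →
      (α - ε) * net.pmax ≤ net.f Istar := by
  intro Istar hIstar
  have hδ : ε1 * pstar ≤ ε1 * (1 + ε0) * net.pmax := by
    rw [mul_assoc]
    exact mul_le_mul_of_nonneg_left (by linarith [(abs_le.mp hest).2]) hε1.1.le
  -- also for `l = 0`, where both sides are the junk value `0`
  have hscaled : β * (net.F B Finset.univ / l) ≤ net.F B Istar / l := by
    rw [← mul_div_assoc]
    exact div_le_div_of_nonneg_right hIstar l.cast_nonneg
  have hV := hF Finset.univ
  rw [← net.pmax_eq_f_univ] at hV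
  rw [← heq]
  exact mul_le_of_abs_sub_le_of_mul_le hβpos.le hδ hV (hF Istar) hscaled

/-- Lemma 6: under Equation System 1, every invitation set `I*` with
`F(B_l, I*) ≥ β·F(B_l, V)` satisfies `f(I*) ≥ (α − ε)·p_max`. -/
theorem objective_value_bounded (net : FriendNet V)
    (α ε ε0 ε1 pstar β : ℝ) {l : ℕ} (B : Fin l → V → Option V)
    (hB : ∀ i : Fin l, net.IsRealization (B i))
    (hα : α ≤ 1) (hε : 0 < ε) (hεα : ε < α)
    (hε0 : ε0 ∈ Set.Ioo (0 : ℝ) 1) (hε1 : ε1 ∈ Set.Ioo (0 : ℝ) 1)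
    (hpstar : 0 < pstar)
    (hest : |pstar - net.pmax| ≤ ε0 * net.pmax)
    (hF : ∀ I : Finset V, |net.F B I / (l : ℝ) - net.f I| ≤ ε1 * pstar)
    (hβ : β = (α - ε1 * (1 + ε0)) / (1 + ε1 * (1 + ε0)))
    (hβpos : 0 < β)
    (heq : β * (1 - ε1 * (1 + ε0)) - ε1 * (1 + ε0) = α - ε) :
    ∀ Istar : Finset V, β * net.F B Finset.univ ≤ net.F B Istar →
      (α - ε) * net.pmax ≤ net.f Istar :=
  objective_value_bounded_general net α ε ε0 ε1 pstar β B hε1 hest hF hβpos heq
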